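/- arXiv:1705.08000 — 10 statements merged into one kernel-verified Lean document; each statement's English description precedes it below -/
import Mathlib

section
/- Let K be a positive integer, let users u_1,…,u_K be drawn from a set with group labels g and nonnegative queue lengths Q, and define the rate of the i-th user in a schedule f = (u_1,…,u_K) as R_i^f = Σ_{j=i+1}^{K} 1[g(u_i) ≠ g(u_j)], and the weight w(f) = Σ_i Q(u_i)·R_i^f (where a 'zero/dummy' entry has queue length 0 and a dummy group distinct from all real groups). If f = (u_1,…,u_i, 0, u_{i+2},…,u_K) has a dummy entry at position i+1, and f' = (u_1,…,u_i, u_{i+2},…,u_K, 0) is obtained by shifting the dummy entry to the end, then w(f') − w(f) = Σ_{j=i+2}^{K} Q(u_j) ≥ 0. -/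
open Finset

/-- Queue length of a slot occupant (dummy `none` has queue length 0). -/
noncomputable def Qo {U : Type} (Q : U → ℝ) : Option U → ℝ := fun o => o.elim 0 Q

/-- Occupant of slot `i` of a schedule (out-of-range slots are dummy). -/
def slot {U : Type} (L : List (Option U)) (i : ℕ) : Option U := L.getD i none

/-- Rate of the occupant of slot `i`: number of later slots occupied by a
different group (dummy slots count as a group different from all real groups). -/
noncomputable def rate {U G : Type} [DecidableEq G] (g : U → G)
    (L : List (Option U)) (i : ℕ) : ℝ :=
  ∑ j ∈ Finset.Ico (i + 1) L.length,
    if (slot L j).map g ≠ (slot L i).map g then (1 : ℝ) else 0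

/-- Weight of a schedule: queue-length-weighted sum of rates. -/
noncomputable def wt {U G : Type} [DecidableEq G] (Q : U → ℝ) (g : U → G)
    (L : List (Option U)) : ℝ :=
  ∑ i ∈ Finset.range L.length, Qo Q (slot L i) * rate g L i

/-!
The contribution of a slot to the weight depends only on the multiset of later slots, so
moving the dummy inside the suffix `B ++ [none]` changes only the weight of that suffix.
There a leading dummy contributes nothing (its queue length is 0), while a trailing dummy
adds 1 to the rate of every entry of `B`, since its group differs from all real groups.
-/

namespace Schedule

variable {U G : Type}

@[simp]
lemma slot_cons_zero (x : Option U) (L : List (Option U)) : slot (x :: L) 0 = x := rfl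

@[simp]
lemma slot_cons_succ (x : Option U) (L : List (Option U)) (n : ℕ) :
    slot (x :: L) (n + 1) = slot L n := by
  simp [slot]

lemma sum_range_slot (f : Option U → ℝ) (L : List (Option U)) :
    ∑ j ∈ range L.length, f (slot L j) = (L.map f).sum := by
  induction L with
  | nil => simp
  | cons x L ih =>
    rw [List.length_cons, sum_range_succ', List.map_cons, List.sum_cons, ← ih]
    simp only [slot_cons_succ, slot_cons_zero]
    ring

variable [DecidableEq G] (Q : U → ℝ) (g : U → G)

noncomputable def otherGroupCount (x : Option U) (L : List (Option U)) : ℝ :=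
  (L.map fun y => if y.map g ≠ x.map g then (1 : ℝ) else 0).sum

lemma otherGroupCount_eq_of_perm (x : Option U) {L L' : List (Option U)} (h : L.Perm L') :
    otherGroupCount g x L = otherGroupCount g x L' :=
  (h.map _).sum_eq

lemma Qo_mul_otherGroupCount_append_none (x : Option U) (L : List (Option U)) :
    Qo Q x * otherGroupCount g x (L ++ [none]) = Qo Q x * otherGroupCount g x L + Qo Q x := by
  cases x <;> simp [otherGroupCount, Qo, mul_add]

lemma rate_cons_zero (x : Option U) (L : List (Option U)) :
    rate g (x :: L) 0 = otherGroupCount g x L := by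
  rw [rate, otherGroupCount, ← sum_range_slot, List.length_cons, sum_Ico_eq_sum_range]
  simp only [Nat.add_sub_cancel, zero_add, add_comm 1, slot_cons_succ, slot_cons_zero]

lemma rate_cons_succ (x : Option U) (L : List (Option U)) (i : ℕ) :
    rate g (x :: L) (i + 1) = rate g L i := by
  rw [rate, rate, List.length_cons, ← sum_Ico_add']
  simp only [slot_cons_succ]

lemma wt_cons (x : Option U) (L : List (Option U)) :
    wt Q g (x :: L) = Qo Q x * otherGroupCount g x L + wt Q g L := by
  rw [wt, wt, List.length_cons, sum_range_succ', add_comm]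
  simp only [slot_cons_succ, slot_cons_zero, rate_cons_succ, rate_cons_zero]

lemma wt_append_sub_wt_append_of_perm (A : List (Option U)) {X Y : List (Option U)}
    (h : X.Perm Y) : wt Q g (A ++ X) - wt Q g (A ++ Y) = wt Q g X - wt Q g Y := by
  induction A with
  | nil => simp
  | cons a A ih =>
    rw [List.cons_append, List.cons_append, wt_cons, wt_cons,
      otherGroupCount_eq_of_perm g a (h.append_left A), ← ih]
    ring

lemma wt_append_none (L : List (Option U)) :
    wt Q g (L ++ [none]) = wt Q g L + (L.map (Qo Q)).sum := by
  induction L with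
  | nil => simp [wt, rate]
  | cons x L ih =>
    rw [List.cons_append, wt_cons, wt_cons, ih, Qo_mul_otherGroupCount_append_none]
    simp only [List.map_cons, List.sum_cons]
    ring

lemma wt_none_cons (L : List (Option U)) : wt Q g (none :: L) = wt Q g L := by
  simp [wt_cons, Qo]

lemma Qo_nonneg {Q : U → ℝ} (hQ : ∀ u, 0 ≤ Q u) (x : Option U) : 0 ≤ Qo Q x := by
  cases x
  · exact le_rfl
  · exact hQ _

end Schedule

/-- Shifting a dummy slot to the end increases the weight by the sum of the
queue lengths of the entries after the dummy, a nonnegative quantity. -/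
theorem stmt0 {U G : Type} [DecidableEq G] (Q : U → ℝ) (g : U → G)
    (hQ : ∀ u, 0 ≤ Q u) (A B : List (Option U)) :
    wt Q g (A ++ B ++ [none]) - wt Q g (A ++ none :: B) = (B.map (Qo Q)).sum ∧
      (0 : ℝ) ≤ (B.map (Qo Q)).sum := by
  refine ⟨?_, List.sum_nonneg fun _ hx => ?_⟩
  · rw [List.append_assoc,
      Schedule.wt_append_sub_wt_append_of_perm Q g A (List.perm_append_singleton _ B),
      Schedule.wt_append_none, Schedule.wt_none_cons]
    ring
  · obtain ⟨x, -, rfl⟩ := List.mem_map.mp hx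
    exact Schedule.Qo_nonneg hQ x
end

section
/- Fix K and a set of Ω ≤ K users {u_1,…,u_Ω} with group labels g and queue lengths Q(u_1) ≥ Q(u_2) ≥ ⋯ ≥ Q(u_Ω) ≥ 0. Among all schedules of the form (u_{σ(1)},…,u_{σ(Ω)}, 0,…,0) for permutations σ of {1,…,Ω}, the identity (longest-queue-first) ordering (u_1,…,u_Ω,0,…,0) maximizes the weight w(f) = Σ_{i=1}^{Ω} Q(u_{σ(i)}) · Σ_{j=i+1}^{K} 1[g(u_{σ(i)}) ≠ g(u_{σ(j)})], where dummy entries at positions Ω+1,…,K count as belonging to a group different from all real groups. -/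
/-! Every user sees all `m` dummy slots behind it, contributing `m · Σ Q` whatever the order.
The rest of the weight is a sum over position pairs `i < j` holding users of different groups,
each contributing the queue length of the user at `i`. That is at most the larger of the two
queue lengths, a symmetric function of the pair, whose sum over pairs is invariant under
permuting the users; the longest-queue-first order attains it. -/

open Finset

theorem Finset.sum_offDiag_lt_comp_perm {α M : Type*} [Fintype α] [LinearOrder α]
    [AddCommMonoid M] (h : α → α → M) (h_symm : ∀ a b, h a b = h b a) (σ : Equiv.Perm α) :
    ∑ p ∈ univ.offDiag with p.1 < p.2, h (σ p.1) (σ p.2) =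
      ∑ p ∈ univ.offDiag with p.1 < p.2, h p.1 p.2 := by
  set F : Sym2 α → M := Sym2.lift ⟨h, h_symm⟩
  have hσ : Function.Bijective (Sym2.map σ) :=
    Finite.injective_iff_bijective.mp (Sym2.map.injective σ.injective)
  calc ∑ p ∈ univ.offDiag with p.1 < p.2, h (σ p.1) (σ p.2)
      = ∑ z ∈ univ.sym2 with ¬z.IsDiag, F (z.map σ) :=
        (sum_sym2_filter_not_isDiag univ fun z => F (z.map σ)).symm
    _ = ∑ z ∈ univ.sym2 with ¬z.IsDiag, F z := by
        simp only [sym2_univ, sum_filter]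
        rw [← hσ.sum_comp fun z => if ¬z.IsDiag then F z else 0]
        simp only [Sym2.isDiag_map σ.injective]
    _ = ∑ p ∈ univ.offDiag with p.1 < p.2, h p.1 p.2 := sum_sym2_filter_not_isDiag univ F

section PaddedSchedule

variable {U G : Type} [DecidableEq G] {n : ℕ} (v : Fin n → U) (m : ℕ)

theorem slot_ofFn_append_replicate (i : ℕ) :
    slot ((List.ofFn fun k => some (v k)) ++ List.replicate m none) i =
      if h : i < n then some (v ⟨i, h⟩) else none := by
  unfold slot
  split_ifs with h
  · rw [List.getD_append _ _ _ _ (by simpa using h), List.getD_eq_getElem _ _ (by simpa using h),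
      List.getElem_ofFn]
  · rw [List.getD_append_right _ _ _ _ (by simpa using h), List.getD_eq_getElem?_getD,
      List.getElem?_getD_replicate_default_eq]

theorem rate_ofFn_append_replicate (g : U → G) (i : Fin n) :
    rate g ((List.ofFn fun k => some (v k)) ++ List.replicate m none) i =
      m + ∑ j ∈ Ioi i, if g (v j) ≠ g (v i) then (1 : ℝ) else 0 := by
  rw [rate, List.length_append, List.length_ofFn, List.length_replicate,
    ← sum_Ico_consecutive _ (show (i : ℕ) + 1 ≤ n from i.isLt) (Nat.le_add_right n m), add_comm]
  congr 1
  · rw [sum_congr rfl fun j hj => ?_, sum_const, Nat.card_Ico, Nat.add_sub_cancel_left,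
      nsmul_one]
    rw [mem_Ico] at hj
    simp [slot_ofFn_append_replicate, hj.1.not_gt]
  · rw [Ico_add_one_left_eq_Ioo, ← Fin.map_valEmbedding_Ioi, sum_map]
    refine sum_congr rfl fun j _ => ?_
    simp [slot_ofFn_append_replicate]

theorem wt_ofFn_append_replicate (Q : U → ℝ) (g : U → G) :
    wt Q g ((List.ofFn fun k => some (v k)) ++ List.replicate m none) =
      m * ∑ i, Q (v i) +
        ∑ p ∈ univ.offDiag with p.1 < p.2, if g (v p.2) ≠ g (v p.1) then Q (v p.1) else 0 := by
  rw [wt, List.length_append, List.length_ofFn, List.length_replicate, sum_range_add,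
    sum_eq_zero (s := range m) fun k _ => by simp [slot_ofFn_append_replicate, Qo], add_zero,
    ← Fin.sum_univ_eq_sum_range, mul_sum,
    sum_finset_product _ univ Ioi (by simpa using fun a b => ne_of_lt), ← sum_add_distrib]
  refine sum_congr rfl fun i _ => ?_
  simp [slot_ofFn_append_replicate, Qo, rate_ofFn_append_replicate, mul_add, mul_sum, mul_comm]

end PaddedSchedule

theorem stmt1_general {U G : Type} [DecidableEq G] (K Ω : ℕ)
    (u : Fin Ω → U) (Q : U → ℝ) (g : U → G)
    (hsorted : ∀ i j : Fin Ω, i ≤ j → Q (u j) ≤ Q (u i))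
    (σ : Equiv.Perm (Fin Ω)) :
    wt Q g ((List.ofFn fun i => some (u (σ i))) ++ List.replicate (K - Ω) none) ≤
      wt Q g ((List.ofFn fun i => some (u i)) ++ List.replicate (K - Ω) none) := by
  rw [wt_ofFn_append_replicate, wt_ofFn_append_replicate, Equiv.sum_comp σ fun i => Q (u i)]
  gcongr _ + ?_
  let pairMax (i j : Fin Ω) : ℝ := if g (u i) ≠ g (u j) then max (Q (u i)) (Q (u j)) else 0
  calc ∑ p ∈ univ.offDiag with p.1 < p.2,
        (if g (u (σ p.2)) ≠ g (u (σ p.1)) then Q (u (σ p.1)) else 0)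
      ≤ ∑ p ∈ univ.offDiag with p.1 < p.2, pairMax (σ p.1) (σ p.2) := by
        gcongr with p
        split_ifs <;> simp_all [pairMax, Ne.symm]
    _ = ∑ p ∈ univ.offDiag with p.1 < p.2, pairMax p.1 p.2 :=
        sum_offDiag_lt_comp_perm pairMax (fun i j => by simp only [pairMax, ne_comm, max_comm]) σ
    _ = ∑ p ∈ univ.offDiag with p.1 < p.2,
          (if g (u p.2) ≠ g (u p.1) then Q (u p.1) else 0) := by
        refine sum_congr rfl fun p hp => ?_
        have hle := hsorted p.1 p.2 (mem_filter.mp hp).2.le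
        simp only [pairMax, ne_comm, max_eq_left hle]

/-- Among all schedules placing a permutation of the `Ω` users in the first
`Ω` of `K` slots (the rest dummy), the longest-queue-first (identity) ordering
maximizes the weight. -/
theorem stmt1 {U G : Type} [DecidableEq G] (K Ω : ℕ) (hΩ : Ω ≤ K)
    (u : Fin Ω → U) (Q : U → ℝ) (g : U → G)
    (hQ : ∀ v, 0 ≤ Q v)
    (hsorted : ∀ i j : Fin Ω, i ≤ j → Q (u j) ≤ Q (u i))
    (σ : Equiv.Perm (Fin Ω)) :
    wt Q g ((List.ofFn fun i => some (u (σ i))) ++ List.replicate (K - Ω) none) ≤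
      wt Q g ((List.ofFn fun i => some (u i)) ++ List.replicate (K - Ω) none) :=
  stmt1_general K Ω u Q g hsorted σ
end

section
/- Fix K, a schedule f = (u_1,…,u_Ω,0,…,0) in longest-queue-first order, and a group i. Suppose u_s is a scheduled user of group i and u_l is an unscheduled user of group i with Q(u_l) ≥ Q(u_s). Let f' be the longest-queue-first schedule using the user set obtained by replacing u_s with u_l. Then w(f') ≥ w(f), i.e., replacing a scheduled user by a same-group user with longer queue (and re-sorting by queue length) never decreases the weight. -/
open Finset

/-!
In a longest-queue-first schedule a user placed before a user of another group has the longer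
queue, so every such pair contributes the larger of its two queue lengths, and every user
collects its queue length once for each dummy slot. The weight is therefore a symmetric function
of the scheduled users, monotone in their queue lengths as long as their groups stay fixed, and
replacing `u_s` by `u_l` keeps every group and raises one queue length.
-/

lemma two_mul_sum_sum_Ioi {ι : Type*} [Fintype ι] [LinearOrder ι] [LocallyFiniteOrderTop ι]
    (F : ι → ι → ℝ) (hsymm : ∀ i j, F i j = F j i) (hdiag : ∀ i, F i i = 0) :
    2 * ∑ i, ∑ j ∈ Ioi i, F i j = ∑ i, ∑ j, F i j := by
  have hsplit : ∀ i j, F i j = (if i < j then F i j else 0) + (if j < i then F j i else 0) := by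
    intro i j
    rcases lt_trichotomy i j with h | rfl | h
    · simp [h, h.not_gt]
    · simp [hdiag]
    · simp [h, h.not_gt, hsymm i j]
  simp only [← Finset.filter_lt_eq_Ioi, Finset.sum_filter]
  rw [Finset.sum_congr rfl fun i _ => Finset.sum_congr rfl fun j _ => hsplit i j]
  simp only [Finset.sum_add_distrib]
  rw [Finset.sum_comm (f := fun i j => if j < i then F j i else 0)]
  ring

lemma Equiv.sum_sum_comp {ι κ M : Type*} [Fintype ι] [Fintype κ] [AddCommMonoid M] (σ : ι ≃ κ)
    (F : κ → κ → M) : ∑ i, ∑ j, F (σ i) (σ j) = ∑ i, ∑ j, F i j :=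
  calc ∑ i, ∑ j, F (σ i) (σ j) = ∑ i, ∑ j, F (σ i) j :=
        Finset.sum_congr rfl fun i _ => σ.sum_comp (F (σ i))
    _ = ∑ i, ∑ j, F i j := σ.sum_comp fun i => ∑ j, F i j

def paddedSchedule {U : Type} {n : ℕ} (u : Fin n → U) (m : ℕ) : List (Option U) :=
  (List.ofFn fun i => some (u i)) ++ List.replicate m none

section paddedSchedule

variable {U G : Type} {n : ℕ} (u : Fin n → U) (m : ℕ)

@[simp]
lemma length_paddedSchedule : (paddedSchedule u m).length = n + m := by
  simp [paddedSchedule]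

lemma slot_paddedSchedule (i : ℕ) :
    slot (paddedSchedule u m) i = if h : i < n then some (u ⟨i, h⟩) else none := by
  unfold slot paddedSchedule
  rw [List.getD_eq_getElem?_getD]
  split_ifs with h
  · rw [List.getElem?_append_left (by simpa using h)]
    simp [h]
  · rcases lt_or_ge i (n + m) with h' | h'
    · rw [List.getElem?_append_right (by simpa using not_lt.1 h)]
      simp [show i - n < m by omega]
    · rw [List.getElem?_eq_none (by simpa using h')]
      rfl

lemma rate_paddedSchedule [DecidableEq G] (g : U → G) (i : Fin n) :
    rate g (paddedSchedule u m) i = m + ∑ j ∈ Ioi i, if g (u j) ≠ g (u i) then 1 else 0 := by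
  have hdummy : ∑ j ∈ Ico n (n + m),
      (if (slot (paddedSchedule u m) j).map g ≠ (slot (paddedSchedule u m) i).map g
        then (1 : ℝ) else 0) = m := by
    rw [Finset.sum_congr rfl fun j hj => by
      rw [slot_paddedSchedule, slot_paddedSchedule, dif_neg (by simp at hj; omega),
        dif_pos i.isLt]]
    simp
  have huser : ∑ j ∈ Ico ((i : ℕ) + 1) n,
      (if (slot (paddedSchedule u m) j).map g ≠ (slot (paddedSchedule u m) i).map g
        then (1 : ℝ) else 0) = ∑ j ∈ Ioi i, if g (u j) ≠ g (u i) then 1 else 0 := by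
    rw [Finset.Ico_add_one_left_eq_Ioo, ← Fin.map_valEmbedding_Ioi, Finset.sum_map]
    refine Finset.sum_congr rfl fun j _ => ?_
    simp [slot_paddedSchedule]
  unfold rate
  rw [length_paddedSchedule, ← Finset.sum_Ico_consecutive _ (by omega : (i : ℕ) + 1 ≤ n)
    (by omega : n ≤ n + m), huser, hdummy, add_comm]

end paddedSchedule

section weight

variable {U G : Type} [DecidableEq G] (Q : U → ℝ) (g : U → G)

lemma wt_paddedSchedule {n : ℕ} (u : Fin n → U) (m : ℕ) :
    wt Q g (paddedSchedule u m)
      = ∑ i, Q (u i) * (m + ∑ j ∈ Ioi i, if g (u j) ≠ g (u i) then 1 else 0) := by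
  have hdummies : ∀ k ∈ range m,
      Qo Q (slot (paddedSchedule u m) (n + k)) * rate g (paddedSchedule u m) (n + k) = 0 := by
    intro k _
    simp [slot_paddedSchedule, Qo]
  unfold wt
  rw [length_paddedSchedule, Finset.sum_range_add, Finset.sum_eq_zero hdummies, add_zero,
    ← Fin.sum_univ_eq_sum_range]
  refine Finset.sum_congr rfl fun i _ => ?_
  simp [slot_paddedSchedule, Qo, rate_paddedSchedule]

/-- The weight of the longest-queue-first schedule of `u` followed by `m` dummy slots: every user
is ahead of all `m` dummies, and every pair of users of different groups contributes the longer
of its two queue lengths (the double sum counts each pair twice). -/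
noncomputable def lqfWeight (m : ℕ) {ι : Type*} [Fintype ι] (u : ι → U) : ℝ :=
  m * ∑ i, Q (u i) + (∑ i, ∑ j, if g (u i) ≠ g (u j) then max (Q (u i)) (Q (u j)) else 0) / 2

lemma wt_paddedSchedule_of_antitone {n : ℕ} (u : Fin n → U) (m : ℕ) (hu : Antitone (Q ∘ u)) :
    wt Q g (paddedSchedule u m) = lqfWeight Q g m u := by
  have hpair : ∀ i, ∀ j ∈ Ioi i, Q (u i) * (if g (u j) ≠ g (u i) then 1 else 0)
      = if g (u i) ≠ g (u j) then max (Q (u i)) (Q (u j)) else 0 := by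
    intro i j hj
    have hQ : Q (u j) ≤ Q (u i) := hu (mem_Ioi.1 hj).le
    simp only [mul_ite, mul_one, mul_zero, max_eq_left hQ, ne_comm]
  rw [wt_paddedSchedule, lqfWeight, ← two_mul_sum_sum_Ioi _
    (fun i j => by simp only [ne_comm, max_comm]) (by simp), mul_div_cancel_left₀ _ two_ne_zero]
  simp only [mul_add, Finset.sum_add_distrib, Finset.mul_sum]
  congr 1
  · simp only [mul_comm]
  · exact Finset.sum_congr rfl fun i _ => Finset.sum_congr rfl (hpair i)

end weight

section lqfWeight

variable {U G : Type} [DecidableEq G] (Q : U → ℝ) (g : U → G) (m : ℕ) {ι κ : Type*}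
  [Fintype ι] [Fintype κ]

lemma lqfWeight_comp_equiv (u : κ → U) (σ : ι ≃ κ) :
    lqfWeight Q g m (u ∘ σ) = lqfWeight Q g m u := by
  simp only [lqfWeight, Function.comp_apply, Equiv.sum_comp σ fun i => Q (u i),
    Equiv.sum_sum_comp σ fun a b => if g (u a) ≠ g (u b) then max (Q (u a)) (Q (u b)) else 0]

lemma lqfWeight_mono {u w : ι → U} (hg : ∀ i, g (w i) = g (u i)) (hQ : ∀ i, Q (u i) ≤ Q (w i)) :
    lqfWeight Q g m u ≤ lqfWeight Q g m w := by
  unfold lqfWeight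
  gcongr with i _ i j
  · exact hQ i
  · simp only [hg]
    split_ifs
    · exact max_le_max (hQ i) (hQ j)
    · rfl

end lqfWeight

theorem stmt2_general {U G : Type} [DecidableEq G] (K Ω : ℕ)
    (Q : U → ℝ) (g : U → G)
    (v : Fin Ω → U) (hv : ∀ i j : Fin Ω, i ≤ j → Q (v j) ≤ Q (v i))
    (s : Fin Ω) (ul : U)
    (hgrp : g ul = g (v s)) (hQl : Q (v s) ≤ Q ul)
    (v' : Fin Ω → U) (σ : Equiv.Perm (Fin Ω))
    (hperm : ∀ i : Fin Ω, v' i = Function.update v s ul (σ i))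
    (hv' : ∀ i j : Fin Ω, i ≤ j → Q (v' j) ≤ Q (v' i)) :
    wt Q g ((List.ofFn fun i => some (v i)) ++ List.replicate (K - Ω) none) ≤
      wt Q g ((List.ofFn fun i => some (v' i)) ++ List.replicate (K - Ω) none) := by
  set w := Function.update v s ul
  have hg : ∀ i, g (w i) = g (v i) := by
    intro i
    rcases eq_or_ne i s with rfl | h
    · simp [w, hgrp]
    · simp [w, h]
  have hQw : ∀ i, Q (v i) ≤ Q (w i) := by
    intro i
    rcases eq_or_ne i s with rfl | h
    · simpa [w] using hQl
    · simp [w, h]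
  have hv'w : v' = w ∘ σ := funext hperm
  calc wt Q g (paddedSchedule v (K - Ω))
      = lqfWeight Q g (K - Ω) v := wt_paddedSchedule_of_antitone Q g v _ hv
    _ ≤ lqfWeight Q g (K - Ω) w := lqfWeight_mono Q g _ hg hQw
    _ = lqfWeight Q g (K - Ω) v' := by rw [hv'w, lqfWeight_comp_equiv]
    _ = wt Q g (paddedSchedule v' (K - Ω)) := (wt_paddedSchedule_of_antitone Q g v' _ hv').symm

/-- Replacing a scheduled user by an unscheduled same-group user with a longer
queue (and re-sorting in longest-queue-first order) never decreases the weight. -/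
theorem stmt2 {U G : Type} [DecidableEq U] [DecidableEq G] (K Ω : ℕ) (hΩ : Ω ≤ K)
    (Q : U → ℝ) (g : U → G) (hQ : ∀ v, 0 ≤ Q v)
    (v : Fin Ω → U) (hv : ∀ i j : Fin Ω, i ≤ j → Q (v j) ≤ Q (v i))
    (s : Fin Ω) (ul : U)
    (hgrp : g ul = g (v s)) (hQl : Q (v s) ≤ Q ul)
    (hul : ∀ i : Fin Ω, v i ≠ ul)
    (v' : Fin Ω → U) (σ : Equiv.Perm (Fin Ω))
    (hperm : ∀ i : Fin Ω, v' i = Function.update v s ul (σ i))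
    (hv' : ∀ i j : Fin Ω, i ≤ j → Q (v' j) ≤ Q (v' i)) :
    wt Q g ((List.ofFn fun i => some (v i)) ++ List.replicate (K - Ω) none) ≤
      wt Q g ((List.ofFn fun i => some (v' i)) ++ List.replicate (K - Ω) none) :=
  stmt2_general K Ω Q g v hv s ul hgrp hQl v' σ hperm hv'
end

section
/- Let f* = (u*_1,…,u*_Ω,0,…,0) be a schedule of length K that maximizes the weight w(f) = Σ_i Q(u_i)·R_i^f over all feasible schedules of a given user population. Then for every i ∈ {1,…,Ω}, the marginal gain Δ_i := Q(u*_i)·(K − i) − Σ_{j=1}^{i−1} Q(u*_j)·1[g(u*_j) = g(u*_i)] is nonnegative. -/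
open Finset

/-!
Replacing the user in slot `i` of the optimal schedule by a dummy gives another feasible
schedule. The user itself loses its rate `R_i ≤ K - i`, while every earlier user of the same
group gains one unit of rate, since slot `i` now holds a group different from its own; earlier
users of other groups are unaffected. So the weight drops by exactly
`Q(u_i) R_i - Σ_{j<i, same group} Q(u_j)`, which is nonnegative by optimality and at most the
marginal gain `Δ_i` because `Q(u_i) ≥ 0`.
-/

section Schedule

variable {U G : Type} [DecidableEq G] (Q : U → ℝ) (g : U → G)

theorem slot_set_none (L : List (Option U)) (i k : ℕ) :
    slot (L.set i none) k = if k = i then none else slot L k := by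
  unfold slot
  rw [List.getD_eq_getElem?_getD, List.getD_eq_getElem?_getD, List.getElem?_set]
  split_ifs <;> simp_all [eq_comm]

theorem lt_length_of_slot_eq_some {L : List (Option U)} {i : ℕ} {v : U}
    (hv : slot L i = some v) : i < L.length := by
  by_contra h
  rw [slot, List.getD_eq_default _ _ (not_lt.mp h)] at hv
  cases hv

theorem slot_ofFn_some_append {n : ℕ} (f : Fin n → U) (l : List (Option U)) (k : Fin n) :
    slot ((List.ofFn fun k => some (f k)) ++ l) k = some (f k) := by
  simp [slot, List.getElem?_append_left]

theorem filterMap_set_none_sublist :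
    ∀ (L : List (Option U)) (i : ℕ), ((L.set i none).filterMap id).Sublist (L.filterMap id)
  | [], _ => by simp
  | a :: L, 0 => by cases a <;> simp
  | none :: L, i + 1 => by simpa using filterMap_set_none_sublist L i
  | some a :: L, i + 1 => by simpa using (filterMap_set_none_sublist L i).cons_cons a

theorem rate_le (L : List (Option U)) {i : ℕ} (hi : i < L.length) :
    rate g L i ≤ (L.length : ℝ) - (i + 1) := by
  calc rate g L i ≤ ∑ _j ∈ Ico (i + 1) L.length, (1 : ℝ) :=
        sum_le_sum fun _ _ => by split_ifs <;> norm_num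
    _ = (L.length : ℝ) - (i + 1) := by
        rw [sum_const, Nat.card_Ico, nsmul_one, Nat.cast_sub (by omega)]
        push_cast; ring

theorem rate_set_none_of_lt (L : List (Option U)) {i k : ℕ} (hik : i < k) :
    rate g (L.set i none) k = rate g L k := by
  unfold rate
  rw [List.length_set, slot_set_none L i k, if_neg hik.ne']
  refine sum_congr rfl fun j hj => ?_
  rw [slot_set_none L i j, if_neg (show j ≠ i by have := (mem_Ico.mp hj).1; omega)]

theorem rate_sub_rate_set_none_of_gt (L : List (Option U)) {i k : ℕ} (hki : k < i)
    (hi : i < L.length) :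
    rate g L k - rate g (L.set i none) k =
      (if (slot L i).map g ≠ (slot L k).map g then 1 else 0) -
        (if none ≠ (slot L k).map g then 1 else 0) := by
  unfold rate
  rw [List.length_set, slot_set_none L i k, if_neg hki.ne, ← sum_sub_distrib,
    sum_eq_single_of_mem i (mem_Ico.mpr ⟨hki, hi⟩)]
  · rw [slot_set_none, if_pos rfl, Option.map_none]
  · intro j _ hji
    rw [slot_set_none, if_neg hji, sub_self]

noncomputable def groupQueue (L : List (Option U)) (γ : G) (k : ℕ) : ℝ :=
  if (slot L k).map g = some γ then Qo Q (slot L k) else 0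

theorem slot_weight_sub_slot_weight_set_none {L : List (Option U)} {i : ℕ} {v : U}
    (hv : slot L i = some v) (k : ℕ) :
    Qo Q (slot L k) * rate g L k - Qo Q (slot (L.set i none) k) * rate g (L.set i none) k =
      (if k = i then Q v * rate g L i else 0) -
        (if k ∈ range i then groupQueue Q g L (g v) k else 0) := by
  rcases lt_trichotomy k i with hki | rfl | hik
  · rw [slot_set_none, if_neg hki.ne, ← mul_sub,
      rate_sub_rate_set_none_of_gt g L hki (lt_length_of_slot_eq_some hv), hv, if_neg hki.ne,
      if_pos (mem_range.mpr hki), groupQueue]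
    rcases slot L k with _ | w
    · simp [Qo]
    · by_cases hg : g w = g v <;> simp [Qo, hg, eq_comm (a := g v)]
  · simp [slot_set_none, hv, Qo]
  · rw [slot_set_none, if_neg hik.ne', rate_set_none_of_lt g L hik, sub_self, if_neg hik.ne',
      if_neg (by simp [hik.le]), sub_self]

theorem wt_sub_wt_set_none {L : List (Option U)} {i : ℕ} {v : U} (hv : slot L i = some v) :
    wt Q g L - wt Q g (L.set i none) =
      Q v * rate g L i - ∑ k ∈ range i, groupQueue Q g L (g v) k := by
  have hi := lt_length_of_slot_eq_some hv
  rw [wt, wt, List.length_set, ← sum_sub_distrib,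
    sum_congr rfl fun k _ => slot_weight_sub_slot_weight_set_none Q g hv k, sum_sub_distrib,
    sum_ite_eq', if_pos (mem_range.mpr hi), sum_ite_mem,
    inter_eq_right.mpr (range_subset_range.mpr hi.le)]

end Schedule

theorem stmt3_general {U G : Type} [DecidableEq G] (K Ω : ℕ) (hΩ : Ω ≤ K)
    (S : Finset U) (Q : U → ℝ) (g : U → G) (hQ : ∀ v, 0 ≤ Q v)
    (u : Fin Ω → U) (hu : Function.Injective u) (huS : ∀ i, u i ∈ S)
    (hopt : ∀ L : List (Option U), L.length = K → (L.filterMap id).Nodup →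
      (∀ v ∈ L.filterMap id, v ∈ S) →
      wt Q g L ≤ wt Q g ((List.ofFn fun i => some (u i)) ++ List.replicate (K - Ω) none))
    (i : Fin Ω) :
    0 ≤ Q (u i) * ((K : ℝ) - ((i : ℕ) + 1)) -
      ∑ j ∈ Finset.Iio i, (if g (u j) = g (u i) then Q (u j) else 0) := by
  set L := (List.ofFn fun i => some (u i)) ++ List.replicate (K - Ω) none
  have hlen : L.length = K := by
    simp only [L, List.length_append, List.length_ofFn, List.length_replicate]
    omega
  have hfilter : L.filterMap id = List.ofFn u := by simp [L, List.ofFn_eq_map, List.filterMap_map]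
  have hsub := filterMap_set_none_sublist L i
  have hle := hopt (L.set i none) (by rw [List.length_set, hlen])
    ((hfilter ▸ List.nodup_ofFn.mpr hu).sublist hsub)
    (fun v hv => by obtain ⟨j, rfl⟩ := List.mem_ofFn.mp (hfilter ▸ hsub.mem hv); exact huS j)
  have hslot : ∀ j : Fin Ω, slot L j = some (u j) := slot_ofFn_some_append u _
  have hrate := rate_le g L (lt_length_of_slot_eq_some (hslot i))
  have hsum : ∑ j ∈ Iio i, (if g (u j) = g (u i) then Q (u j) else 0) =
      ∑ k ∈ range i, groupQueue Q g L (g (u i)) k := by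
    rw [← Nat.Iio_eq_range, ← Fin.map_valEmbedding_Iio, sum_map]
    refine sum_congr rfl fun j _ => ?_
    simp [groupQueue, hslot, Qo]
  rw [hlen] at hrate
  rw [hsum]
  linarith [wt_sub_wt_set_none Q g (hslot i), mul_le_mul_of_nonneg_left hrate (hQ (u i))]

/-- In a weight-maximizing schedule `(u 0, …, u (Ω-1), 0, …, 0)` over all
feasible schedules of length `K` using distinct users from the population `S`,
every marginal gain `Q(u i)·(K − (i+1)) − Σ_{j<i, same group} Q(u j)` is
nonnegative. -/
theorem stmt3 {U G : Type} [DecidableEq U] [DecidableEq G] (K Ω : ℕ) (hΩ : Ω ≤ K)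
    (S : Finset U) (Q : U → ℝ) (g : U → G) (hQ : ∀ v, 0 ≤ Q v)
    (u : Fin Ω → U) (hu : Function.Injective u) (huS : ∀ i, u i ∈ S)
    (hopt : ∀ L : List (Option U), L.length = K → (L.filterMap id).Nodup →
      (∀ v ∈ L.filterMap id, v ∈ S) →
      wt Q g L ≤ wt Q g ((List.ofFn fun i => some (u i)) ++ List.replicate (K - Ω) none))
    (i : Fin Ω) :
    0 ≤ Q (u i) * ((K : ℝ) - ((i : ℕ) + 1)) -
      ∑ j ∈ Finset.Iio i, (if g (u j) = g (u i) then Q (u j) else 0) :=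
  stmt3_general K Ω hΩ S Q g hQ u hu huS hopt i
end

section
/- Let I ≥ 1 and K ≥ 1 be integers and let m_1,…,m_I be nonnegative reals. Then the Full-duplex sum-rate F(m) = Σ_{1 ≤ k < j ≤ I} m_j m_k + (K − Σ_{j=1}^{I} m_j)·Σ_{j=1}^{I} m_j, subject to 0 ≤ m_i ≤ N/I for all i, is at most I·K²/(2(I+1)) whenever N/I ≥ K/(I+1), with equality at m_i = K/(I+1) for all i; and if N/I < K/(I+1), the maximum over the box equals N(2IK − N − IN)/(2I), attained at m_i = N/I for all i. -/
/-!
Writing `S = ∑ mᵢ` and `Q = ∑ mᵢ²`, the cross term is `(S² - Q)/2`, so `2F = 2KS - S² - Q`.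
Cauchy–Schwarz `S² ≤ I·Q` bounds this by the concave quadratic `(2IKS - (I+1)S²)/I` in `S`
alone, whose vertex `S = IK/(I+1)` is reached by equal loads `mᵢ = K/(I+1)`. When the box caps
`S` at `N` below the vertex, the quadratic is increasing up to `N`, and equal loads `mᵢ = N/I`
attain both `S = N` and equality in Cauchy–Schwarz.
-/

open Finset

section PairSum

variable {ι R : Type*} [Fintype ι] [LinearOrder ι] [LocallyFiniteOrderBot ι]
  [LocallyFiniteOrderTop ι] [CommSemiring R]

theorem sum_sum_Ioi_mul_eq_sum_sum_Iio_mul (m : ι → R) :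
    ∑ j, ∑ k ∈ Ioi j, m j * m k = ∑ j, ∑ k ∈ Iio j, m j * m k := by
  rw [sum_comm' (t' := univ) (s' := fun k => Iio k) (by simp)]
  simp_rw [mul_comm]

theorem sq_sum_eq_sum_sq_add_two_mul_sum_sum_Iio_mul (m : ι → R) :
    (∑ j, m j) ^ 2 = ∑ j, m j ^ 2 + 2 * ∑ j, ∑ k ∈ Iio j, m j * m k := by
  have hrow (j : ι) : ∑ k, m j * m k
      = m j ^ 2 + (∑ k ∈ Ioi j, m j * m k + ∑ k ∈ Iio j, m j * m k) := by
    rw [← sum_add_sum_compl {j}, ← Ioi_disjUnion_Iio, sum_disjUnion, sum_singleton, sq]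
  rw [sq, sum_mul_sum, sum_congr rfl fun j _ => hrow j, sum_add_distrib, sum_add_distrib,
    sum_sum_Ioi_mul_eq_sum_sum_Iio_mul, two_mul]

end PairSum

section FullDuplexRate

variable {ι : Type*} [Fintype ι] [LinearOrder ι] [LocallyFiniteOrderBot ι]

def fullDuplexRate (K : ℝ) (m : ι → ℝ) : ℝ :=
  (∑ j, ∑ k ∈ Iio j, m j * m k) + (K - ∑ j, m j) * ∑ j, m j

variable [LocallyFiniteOrderTop ι]

theorem two_mul_fullDuplexRate (K : ℝ) (m : ι → ℝ) :
    2 * fullDuplexRate K m = 2 * K * ∑ j, m j - (∑ j, m j) ^ 2 - ∑ j, m j ^ 2 := by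
  rw [fullDuplexRate]
  linear_combination -sq_sum_eq_sum_sq_add_two_mul_sum_sum_Iio_mul m

theorem two_mul_card_mul_fullDuplexRate_le (K : ℝ) (m : ι → ℝ) :
    2 * Fintype.card ι * fullDuplexRate K m
      ≤ 2 * Fintype.card ι * K * ∑ j, m j - (Fintype.card ι + 1) * (∑ j, m j) ^ 2 := by
  have hCS : (∑ j, m j) ^ 2 ≤ Fintype.card ι * ∑ j, m j ^ 2 := by
    simpa using sq_sum_le_card_mul_sum_sq (s := univ) (f := m)
  linear_combination (Fintype.card ι : ℝ) * two_mul_fullDuplexRate K m + hCS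

theorem fullDuplexRate_const (K c : ℝ) :
    fullDuplexRate K (fun _ : ι => c)
      = Fintype.card ι * c * (2 * K - (Fintype.card ι + 1) * c) / 2 := by
  have h := two_mul_fullDuplexRate K (fun _ : ι => c)
  simp only [sum_const, card_univ, nsmul_eq_mul] at h
  linear_combination h / 2

theorem fullDuplexRate_le [Nonempty ι] (K : ℝ) (m : ι → ℝ) :
    fullDuplexRate K m ≤ Fintype.card ι * K ^ 2 / (2 * (Fintype.card ι + 1)) := by
  have hI : (0 : ℝ) < Fintype.card ι := by exact_mod_cast Fintype.card_pos
  rw [le_div_iff₀ (by positivity)]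
  refine le_of_mul_le_mul_left ?_ hI
  linear_combination (Fintype.card ι + 1 : ℝ) * two_mul_card_mul_fullDuplexRate_le K m +
    sq_nonneg ((Fintype.card ι + 1) * ∑ j, m j - Fintype.card ι * K)

theorem two_mul_card_mul_fullDuplexRate_le_of_sum_le {K s : ℝ} {m : ι → ℝ}
    (hs : ∑ j, m j ≤ s) (hsK : (Fintype.card ι + 1) * s ≤ Fintype.card ι * K) :
    2 * Fintype.card ι * fullDuplexRate K m
      ≤ 2 * Fintype.card ι * K * s - (Fintype.card ι + 1) * s ^ 2 := by
  have hvertex : 0 ≤ 2 * Fintype.card ι * K - (Fintype.card ι + 1) * (∑ j, m j + s) := by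
    nlinarith
  linear_combination two_mul_card_mul_fullDuplexRate_le K m +
    mul_nonneg (sub_nonneg.2 hs) hvertex

end FullDuplexRate

theorem stmt5_general (I K : ℕ) (hI : 1 ≤ I) (N : ℝ) (hN : 0 ≤ N) :
    let F : (Fin I → ℝ) → ℝ := fun m =>
      (∑ j : Fin I, ∑ k ∈ Finset.Iio j, m j * m k) +
        ((K : ℝ) - ∑ j, m j) * ∑ j, m j
    ((K : ℝ) / ((I : ℝ) + 1) ≤ N / (I : ℝ) →
      (∀ m : Fin I → ℝ, (∀ i, 0 ≤ m i ∧ m i ≤ N / (I : ℝ)) →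
        F m ≤ (I : ℝ) * (K : ℝ) ^ 2 / (2 * ((I : ℝ) + 1))) ∧
      F (fun _ => (K : ℝ) / ((I : ℝ) + 1)) =
        (I : ℝ) * (K : ℝ) ^ 2 / (2 * ((I : ℝ) + 1))) ∧
    (N / (I : ℝ) < (K : ℝ) / ((I : ℝ) + 1) →
      IsGreatest
        {y : ℝ | ∃ m : Fin I → ℝ, (∀ i, 0 ≤ m i ∧ m i ≤ N / (I : ℝ)) ∧ y = F m}
        (N * (2 * (I : ℝ) * (K : ℝ) - N - (I : ℝ) * N) / (2 * (I : ℝ)))) := by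
  intro F
  rw [show F = fullDuplexRate (K : ℝ) from rfl]
  have : Nonempty (Fin I) := ⟨⟨0, hI⟩⟩
  have hI0 : (0 : ℝ) < I := by exact_mod_cast hI
  refine ⟨fun _ => ⟨fun m _ => ?_, ?_⟩, fun hlt => ⟨⟨fun _ => N / I, ?_, ?_⟩, ?_⟩⟩
  · simpa using fullDuplexRate_le (K : ℝ) m
  · rw [fullDuplexRate_const, Fintype.card_fin]
    field_simp
    ring
  · exact fun _ => ⟨by positivity, le_rfl⟩
  · rw [fullDuplexRate_const, Fintype.card_fin]
    field_simp
    ring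
  · rintro y ⟨m, hm, rfl⟩
    have hsum : ∑ j, m j ≤ N := by
      simpa [mul_div_cancel₀ N hI0.ne'] using
        sum_le_card_nsmul univ m (N / I) fun i _ => (hm i).2
    have hNK : (I + 1) * N ≤ I * K := by
      rw [div_lt_div_iff₀ hI0 (by positivity)] at hlt
      linarith
    have h := two_mul_card_mul_fullDuplexRate_le_of_sum_le (K := (K : ℝ)) hsum
      (by simpa using hNK)
    rw [Fintype.card_fin] at h
    rw [le_div_iff₀ (by positivity)]
    linarith

/-- Full-duplex sum-rate optimization over the box `0 ≤ mᵢ ≤ N/I`: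
if `N/I ≥ K/(I+1)` the maximum of
`Σ_{k<j} m_j m_k + (K − Σ m_j)·Σ m_j` is `I·K²/(2(I+1))`, attained at
`mᵢ = K/(I+1)`; otherwise the maximum is `N(2IK − N − IN)/(2I)`, attained at
`mᵢ = N/I`. -/
theorem stmt5 (I K : ℕ) (hI : 1 ≤ I) (hK : 1 ≤ K) (N : ℝ) (hN : 0 ≤ N) :
    let F : (Fin I → ℝ) → ℝ := fun m =>
      (∑ j : Fin I, ∑ k ∈ Finset.Iio j, m j * m k) +
        ((K : ℝ) - ∑ j, m j) * ∑ j, m j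
    ((K : ℝ) / ((I : ℝ) + 1) ≤ N / (I : ℝ) →
      (∀ m : Fin I → ℝ, (∀ i, 0 ≤ m i ∧ m i ≤ N / (I : ℝ)) →
        F m ≤ (I : ℝ) * (K : ℝ) ^ 2 / (2 * ((I : ℝ) + 1))) ∧
      F (fun _ => (K : ℝ) / ((I : ℝ) + 1)) =
        (I : ℝ) * (K : ℝ) ^ 2 / (2 * ((I : ℝ) + 1))) ∧
    (N / (I : ℝ) < (K : ℝ) / ((I : ℝ) + 1) →
      IsGreatest
        {y : ℝ | ∃ m : Fin I → ℝ, (∀ i, 0 ≤ m i ∧ m i ≤ N / (I : ℝ)) ∧ y = F m}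
        (N * (2 * (I : ℝ) * (K : ℝ) - N - (I : ℝ) * N) / (2 * (I : ℝ)))) :=
  stmt5_general I K hI N hN
end

section
/- With α = K/N, define the Full-duplex per-user capacity ν_FD = I·K²/(2N(I+1)) when N ≥ IK/(I+1) and ν_FD = (2IK − N − IN)/(2I) otherwise, and the Half-duplex per-user capacity ν_HD = K²/(4N) when N ≥ K/2 and ν_HD = K − N otherwise. Then the gain G_FD = ν_FD/ν_HD equals: 2I/(I+1) if α ≤ (I+1)/I; 2(2Iα − 1 − I)/(Iα²) if (I+1)/I ≤ α ≤ 2; and 1 + (I−1)/(2I(α−1)) if α ≥ 2. -/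
/-- With `α = K/N`, the Full-duplex gain `ν_FD/ν_HD` equals `2I/(I+1)` for
`α ≤ (I+1)/I`, `2(2Iα − 1 − I)/(Iα²)` for `(I+1)/I ≤ α ≤ 2`, and
`1 + (I−1)/(2I(α−1))` for `α ≥ 2`. -/
theorem stmt6 (N K I : ℝ) (hN : 0 < N) (hK : 0 < K) (hI : 1 ≤ I) :
    let α := K / N
    let νFD : ℝ :=
      if I * K / (I + 1) ≤ N then I * K ^ 2 / (2 * N * (I + 1))
      else (2 * I * K - N - I * N) / (2 * I)
    let νHD : ℝ := if K / 2 ≤ N then K ^ 2 / (4 * N) else K - N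
    νFD / νHD =
      if α ≤ (I + 1) / I then 2 * I / (I + 1)
      else if α ≤ 2 then 2 * (2 * I * α - 1 - I) / (I * α ^ 2)
      else 1 + (I - 1) / (2 * I * (α - 1)) := by
  intro α νFD νHD
  have hI0 : (0:ℝ) < I := lt_of_lt_of_le one_pos hI
  have hI1 : (0:ℝ) < I + 1 := by linarith
  have h1 : (I * K / (I + 1) ≤ N) ↔ (α ≤ (I + 1) / I) := by
    rw [div_le_iff₀ hI1, show α = K / N from rfl, div_le_div_iff₀ hN hI0]
    constructor <;> intro h <;> nlinarith
  have h2 : (K / 2 ≤ N) ↔ (α ≤ 2) := by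
    rw [div_le_iff₀ (by norm_num : (0:ℝ) < 2),
      show α = K / N from rfl, div_le_iff₀ hN]
    constructor <;> intro h <;> linarith
  show (if I * K / (I + 1) ≤ N then I * K ^ 2 / (2 * N * (I + 1))
      else (2 * I * K - N - I * N) / (2 * I)) /
      (if K / 2 ≤ N then K ^ 2 / (4 * N) else K - N) = _
  by_cases hc1 : α ≤ (I + 1) / I
  · have hc2 : α ≤ 2 := by
      refine hc1.trans ?_
      rw [div_le_iff₀ hI0]; linarith
    rw [if_pos (h1.mpr hc1), if_pos (h2.mpr hc2), if_pos hc1]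
    field_simp
    ring
  · by_cases hc2 : α ≤ 2
    · rw [if_neg (h1.not.mpr hc1), if_pos (h2.mpr hc2), if_neg hc1, if_pos hc2]
      have hα : α = K / N := rfl
      rw [hα]
      field_simp
      ring
    · rw [if_neg (h1.not.mpr hc1), if_neg (h2.not.mpr hc2), if_neg hc1, if_neg hc2]
      have hKN : N < K := by
        have : ¬ (K / 2 ≤ N) := h2.not.mpr hc2
        push_neg at this
        linarith
      have hα : α = K / N := rfl
      have hα1 : α - 1 ≠ 0 := by
        rw [hα]
        have : (2:ℝ) < K / N := lt_of_not_ge hc2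
        intro h; nlinarith
      have hKN' : K - N ≠ 0 := sub_ne_zero.mpr (ne_of_gt hKN)
      rw [hα]
      field_simp
      ring
end

section
/- For every real α ≥ (I+1)/I with I ≥ 1 a positive integer, the mid-regime Full-duplex gain 2(2Iα − 1 − I)/(Iα²) is at most 2I/(I+1), i.e., the gain function G_FD defined piecewise as 2I/(I+1) for α ≤ (I+1)/I, 2(2Iα−1−I)/(Iα²) for (I+1)/I ≤ α ≤ 2, and 1 + (I−1)/(2I(α−1)) for α ≥ 2, is maximized at α = (I+1)/I, is continuous at the breakpoints α = (I+1)/I and α = 2, and satisfies G_FD(α) > 1 for all α in ((I+1)/I, ∞) when I ≥ 2. -/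
/-!
Clearing denominators, the mid-regime bound `2(2Iα - 1 - I)/(Iα²) ≤ 2I/(I+1)` is the
square `(Iα - (I+1))² ≥ 0`, with equality exactly at the breakpoint `α₀ = (I+1)/I`; the
high-regime formula decreases in `α` and is already below `2I/(I+1)` at `α = 2`.
Continuity follows because adjacent formulas agree at the breakpoints. For `I ≥ 2`, the
inequality `1 < 2(2Iα - 1 - I)/(Iα²)` is a concave quadratic condition in `α` that holds at
both ends `α₀` and `2`, hence on all of `[α₀, 2]`.
-/

open Set

noncomputable section

namespace FullDuplex

def midGain (I α : ℝ) : ℝ := 2 * (2 * I * α - 1 - I) / (I * α ^ 2)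

def highGain (I α : ℝ) : ℝ := 1 + (I - 1) / (2 * I * (α - 1))

def upperGain (I α : ℝ) : ℝ := if α ≤ 2 then midGain I α else highGain I α

def fdGain (I α : ℝ) : ℝ := if α ≤ (I + 1) / I then 2 * I / (I + 1) else upperGain I α

variable {I α : ℝ}

lemma one_lt_breakpoint (hI : 0 < I) : 1 < (I + 1) / I := by
  rw [lt_div_iff₀ hI]; linarith

lemma breakpoint_le_two (hI : 1 ≤ I) : (I + 1) / I ≤ 2 := by
  rw [div_le_iff₀ (by linarith)]; linarith

lemma midGain_le (hI : 0 < I) (hα : α ≠ 0) : midGain I α ≤ 2 * I / (I + 1) := by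
  rw [midGain, div_le_div_iff₀ (by positivity) (by linarith)]
  nlinarith [sq_nonneg (I * α - (I + 1))]

lemma midGain_breakpoint (hI : 0 < I) : midGain I ((I + 1) / I) = 2 * I / (I + 1) := by
  rw [midGain]
  field_simp
  ring

lemma midGain_two (hI : I ≠ 0) : midGain I 2 = highGain I 2 := by
  rw [midGain, highGain]
  field_simp
  ring

lemma highGain_le (hI : 1 ≤ I) (hα : 2 ≤ α) : highGain I α ≤ 2 * I / (I + 1) := by
  have hfrac : (I - 1) / (2 * I * (α - 1)) ≤ (I - 1) / (I + 1) :=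
    div_le_div_of_nonneg_left (by linarith) (by linarith) (by nlinarith)
  have hpeak : 1 + (I - 1) / (I + 1) = 2 * I / (I + 1) := by
    field_simp
    ring
  rw [highGain]
  linarith

lemma one_lt_midGain (hI : 1 < I) (h₀ : (I + 1) / I ≤ α) (h₂ : α ≤ 2) : 1 < midGain I α := by
  have hIα : I + 1 ≤ I * α := by rwa [div_le_iff₀ (by linarith), mul_comm] at h₀
  have hα : 0 < α := by linarith [one_lt_breakpoint (I := I) (by linarith)]
  rw [midGain, lt_div_iff₀ (by positivity)]
  nlinarith [mul_nonneg (sub_nonneg.2 h₂) (sub_nonneg.2 hIα), mul_pos (sub_pos.2 hI) hα]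

lemma one_lt_highGain (hI : 1 < I) (hα : 1 < α) : 1 < highGain I α := by
  have : 0 < (I - 1) / (2 * I * (α - 1)) := by
    apply div_pos <;> nlinarith
  rw [highGain]
  linarith

lemma upperGain_le (hI : 1 ≤ I) (hα : 0 < α) : upperGain I α ≤ 2 * I / (I + 1) := by
  unfold upperGain
  split_ifs with h₂
  · exact midGain_le (by linarith) hα.ne'
  · exact highGain_le hI (le_of_not_ge h₂)

lemma fdGain_le_fdGain_breakpoint (hI : 1 ≤ I) (α : ℝ) :
    fdGain I α ≤ fdGain I ((I + 1) / I) := by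
  have hpeak : fdGain I ((I + 1) / I) = 2 * I / (I + 1) := if_pos le_rfl
  rw [hpeak, fdGain]
  split_ifs with h₀
  · exact le_rfl
  · have := one_lt_breakpoint (I := I) (by linarith)
    exact upperGain_le hI (by linarith [lt_of_not_ge h₀])

lemma one_lt_fdGain (hI : 1 < I) (hα : (I + 1) / I < α) : 1 < fdGain I α := by
  rw [fdGain, if_neg hα.not_ge, upperGain]
  split_ifs with h₂
  · exact one_lt_midGain hI hα.le h₂
  · exact one_lt_highGain hI ((one_lt_breakpoint (by linarith)).trans hα)

lemma continuousOn_upperGain (hI : I ≠ 0) : ContinuousOn (upperGain I) (Ioi 1) := by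
  have hmid : ContinuousOn (midGain I) (Ioi 0) := by
    intro α hα
    refine (ContinuousAt.div (by fun_prop) (by fun_prop) ?_).continuousWithinAt
    exact mul_ne_zero hI (pow_ne_zero 2 (ne_of_gt hα))
  have hhigh : ContinuousOn (highGain I) (Ioi 1) := by
    intro α hα
    refine (ContinuousAt.add continuousAt_const
      (ContinuousAt.div continuousAt_const (by fun_prop) ?_)).continuousWithinAt
    exact mul_ne_zero (mul_ne_zero two_ne_zero hI) (sub_ne_zero.2 (ne_of_gt hα))
  refine ContinuousOn.if ?_ (hmid.mono (inter_subset_left.trans (Ioi_subset_Ioi zero_le_one)))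
    (hhigh.mono inter_subset_left)
  · rintro α ⟨-, hα⟩
    rw [show {a : ℝ | a ≤ 2} = Iic 2 from rfl, frontier_Iic] at hα
    rw [hα, midGain_two hI]

theorem continuous_fdGain (hI : 1 ≤ I) : Continuous (fdGain I) := by
  have hI₀ : 0 < I := by linarith
  refine continuous_if_le continuous_id continuous_const continuousOn_const
    ((continuousOn_upperGain hI₀.ne').mono fun α hα => ?_) fun α hα => ?_
  · exact (one_lt_breakpoint hI₀).trans_le hα
  · rw [hα, upperGain, if_pos (breakpoint_le_two hI), midGain_breakpoint hI₀]

end FullDuplex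

end

open FullDuplex in
/-- Properties of the piecewise Full-duplex gain function `G_FD`: the
mid-regime formula is at most `2I/(I+1)` for `α ≥ (I+1)/I`; `G_FD` is
maximized at `α = (I+1)/I`; it is continuous at the breakpoints
`α = (I+1)/I` and `α = 2`; and for `I ≥ 2` it exceeds `1` on
`((I+1)/I, ∞)`. -/
theorem stmt7 (I : ℕ) (hI : 1 ≤ I) :
    let Ir : ℝ := (I : ℝ)
    let G : ℝ → ℝ := fun α =>
      if α ≤ (Ir + 1) / Ir then 2 * Ir / (Ir + 1)
      else if α ≤ 2 then 2 * (2 * Ir * α - 1 - Ir) / (Ir * α ^ 2)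
      else 1 + (Ir - 1) / (2 * Ir * (α - 1))
    (∀ α : ℝ, (Ir + 1) / Ir ≤ α →
      2 * (2 * Ir * α - 1 - Ir) / (Ir * α ^ 2) ≤ 2 * Ir / (Ir + 1)) ∧
    (∀ α : ℝ, 0 < α → G α ≤ G ((Ir + 1) / Ir)) ∧
    ContinuousAt G ((Ir + 1) / Ir) ∧ ContinuousAt G 2 ∧
    (2 ≤ I → ∀ α : ℝ, (Ir + 1) / Ir < α → 1 < G α) := by
  intro Ir G
  have hIr : (1 : ℝ) ≤ Ir := Nat.one_le_cast.mpr hI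
  have hbreak : 1 < (Ir + 1) / Ir := one_lt_breakpoint (by linarith)
  rw [show G = fdGain Ir from rfl]
  refine ⟨fun α hα => midGain_le (by linarith) (by linarith),
    fun α _ => fdGain_le_fdGain_breakpoint hIr α,
    (continuous_fdGain hIr).continuousAt, (continuous_fdGain hIr).continuousAt,
    fun hI₂ α hα => one_lt_fdGain (Nat.one_lt_cast.mpr hI₂) hα⟩
end

section
/- Let K = 2^r for a positive integer r ≥ 1, and suppose all users have queue length 1. The MaxWeight schedule that serves K−1 users, one from each of K−1 distinct groups, achieves total rate K(K−1)/2, while the greedy schedule serving K/2 users from group 1, then K/4 from group 2, …, then 1 user from group r achieves total rate (K² − 1)/3. Consequently the ratio of greedy to optimal rate is (K²−1)/3 ÷ K(K−1)/2 = 2(K+1)/(3K), which tends to 2/3 as K → ∞. -/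
open Finset Filter

theorem sum_range_sub_succ (a : ℝ) (m : ℕ) :
    ∑ i ∈ range m, (a - ((i : ℝ) + 1)) = m * a - m * (m + 1) / 2 := by
  induction m with
  | zero => simp
  | succ m ih =>
    rw [sum_range_succ, ih]
    push_cast
    ring

theorem maxWeight_totalRate (K : ℕ) :
    ∑ i ∈ range (K - 1), ((K : ℝ) - ((i : ℝ) + 1)) = K * (K - 1) / 2 := by
  cases K with
  | zero => simp
  | succ m =>
    rw [Nat.add_sub_cancel, sum_range_sub_succ]
    push_cast
    ring

/-- Group `j + 1` of the greedy schedule has `2 ^ (r - 1 - j)` users, and each of them is followed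
by exactly `2 ^ (r - 1 - j)` mini-slots that are idle or probe a later group. -/
theorem greedy_totalRate (r : ℕ) :
    ∑ j ∈ range r, (2 : ℝ) ^ (r - 1 - j) * 2 ^ (r - 1 - j) = (4 ^ r - 1) / 3 := by
  rw [sum_range_reflect (fun j => (2 : ℝ) ^ j * 2 ^ j) r]
  simp_rw [← mul_pow]
  rw [geom_sum_eq (by norm_num)]
  norm_num

theorem greedy_div_maxWeight {K : ℝ} (hK₀ : K ≠ 0) (hK₁ : K ≠ 1) :
    ((K ^ 2 - 1) / 3) / (K * (K - 1) / 2) = 2 * (K + 1) / (3 * K) := by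
  have : K - 1 ≠ 0 := sub_ne_zero.mpr hK₁
  field_simp
  ring

theorem tendsto_two_mul_succ_div_three_mul :
    Tendsto (fun k : ℕ => 2 * ((k : ℝ) + 1) / (3 * (k : ℝ))) atTop (nhds (2 / 3)) := by
  convert tendsto_add_mul_div_add_mul_atTop_nhds (2 : ℝ) 0 2 (d := 3) (by norm_num) using 2
  ring

/-- Tightness example for the 2/3 bound with `K = 2^r` and unit queue lengths:
the MaxWeight schedule (one user from each of `K−1` groups) has total rate
`K(K−1)/2`; the greedy schedule (`2^{r-1-j}` users from group `j+1` for
`j = 0,…,r−1`, each earning rate `2^{r-1-j}`) has total rate `(K²−1)/3`;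
their ratio is `2(K+1)/(3K)`, which tends to `2/3` as `K → ∞`. -/
theorem stmt8 (r : ℕ) (hr : 1 ≤ r) :
    let K : ℕ := 2 ^ r
    (∑ i ∈ Finset.range (K - 1), ((K : ℝ) - ((i : ℝ) + 1)) =
        (K : ℝ) * ((K : ℝ) - 1) / 2) ∧
    (∑ j ∈ Finset.range r, ((2 : ℝ) ^ (r - 1 - j)) * ((2 : ℝ) ^ (r - 1 - j)) =
        ((K : ℝ) ^ 2 - 1) / 3) ∧
    ((((K : ℝ) ^ 2 - 1) / 3) / ((K : ℝ) * ((K : ℝ) - 1) / 2) =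
        2 * ((K : ℝ) + 1) / (3 * (K : ℝ))) ∧
    Tendsto (fun k : ℕ => 2 * ((k : ℝ) + 1) / (3 * (k : ℝ))) atTop
      (nhds (2 / 3)) := by
  intro K
  have hK_sq : (K : ℝ) ^ 2 = 4 ^ r := by
    push_cast [K]
    rw [← pow_mul, mul_comm, pow_mul]
    norm_num
  have hK₁ : (K : ℝ) ≠ 1 := by
    push_cast [K]
    exact (one_lt_pow₀ one_lt_two (by omega)).ne'
  refine ⟨maxWeight_totalRate K, ?_, greedy_div_maxWeight (by positivity) hK₁,
    tendsto_two_mul_succ_div_three_mul⟩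
  rw [hK_sq, greedy_totalRate]
end

section
/- Let Q_1 ≥ ⋯ ≥ Q_m > 0 be queue lengths of m users all in one group, scheduled by the greedy policy at mini-slots t(1) < t(2) < ⋯ < t(m), where t(i) = i for all i. Let T_m be the smallest positive integer with Q_m·T_m ≥ Σ_{j<m} Q_j, and set K = t(m) + T_m. Define the extra weight ε = Σ_{i=1}^{m} Q_i·(m − i) and the actual weight w = Σ_{i=1}^{m} Q_i·(K − t(i) − (m − i)). If each user's marginal gain at its scheduling slot is nonnegative, i.e. Q_i(K − t(i)) ≥ Σ_{j<i} Q_j for all i, then ε ≤ w, equivalently ε ≤ (1/2)·(ε + w). -/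
open Finset

lemma eps_eq (Q : ℕ → ℝ) : ∀ n : ℕ,
    ∑ i ∈ Finset.range n, Q i * ((n : ℝ) - 1 - (i : ℝ)) =
      ∑ j ∈ Finset.range n, ∑ i ∈ Finset.range j, Q i := by
  intro n
  induction n with
  | zero => simp
  | succ n ih =>
    rw [Finset.sum_range_succ (f := fun j => ∑ i ∈ Finset.range j, Q i), ← ih,
      Finset.sum_range_succ]
    push_cast
    rw [← Finset.sum_add_distrib]
    ring_nf
    try rw [mul_zero, add_zero]
    apply Finset.sum_congr rfl
    intro i _
    ring

/-- Extra weight is at most actual weight (consecutive-slot case): `m` users of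
one group with positive nonincreasing queue lengths `Q 0 ≥ ⋯ ≥ Q (m-1)` are
probed at slots `1,…,m` of `K = m + Tm` slots, where `Tm` is the smallest
positive integer with `Q (m-1)·Tm ≥ Σ_{j<m-1} Q j`. If each marginal gain is
nonnegative, i.e. `Q i·(K − (i+1)) ≥ Σ_{j<i} Q j` for all `i < m`, then the
extra weight `ε = Σ_i Q i·(m − 1 − i)` is at most the actual weight
`w = Tm·Σ_i Q i` (equivalently `ε ≤ (w + ε)/2`). -/
theorem stmt12 (m : ℕ) (hm : 1 ≤ m) (Q : ℕ → ℝ)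
    (hpos : ∀ i < m, 0 < Q i)
    (hmono : ∀ i j, i ≤ j → j < m → Q j ≤ Q i)
    (Tm : ℕ)
    (hTm : IsLeast
      {t : ℕ | 0 < t ∧ ∑ j ∈ Finset.range (m - 1), Q j ≤ Q (m - 1) * (t : ℝ)} Tm)
    (hmg : ∀ i < m,
      ∑ j ∈ Finset.range i, Q j ≤ Q i * (((m + Tm : ℕ) : ℝ) - ((i : ℝ) + 1))) :
    ∑ i ∈ Finset.range m, Q i * ((m : ℝ) - 1 - (i : ℝ)) ≤
      (Tm : ℝ) * ∑ i ∈ Finset.range m, Q i := by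
  have key : ∀ j < m, ∑ i ∈ Finset.range j, Q i ≤ Q j * Tm := by
    intro j hj
    calc ∑ i ∈ Finset.range j, Q i
        ≤ ∑ i ∈ Finset.range (m - 1), Q i := by
          apply Finset.sum_le_sum_of_subset_of_nonneg
          · exact Finset.range_subset_range.2 (by omega)
          · intro i hi _
            exact (hpos i (by have := Finset.mem_range.1 hi; omega)).le
      _ ≤ Q (m - 1) * Tm := hTm.1.2
      _ ≤ Q j * Tm := by
          apply mul_le_mul_of_nonneg_right (hmono j (m - 1) (by omega) (by omega))
          exact Nat.cast_nonneg _
  rw [eps_eq, Finset.mul_sum]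
  apply Finset.sum_le_sum
  intro j hj
  rw [mul_comm]
  exact key j (Finset.mem_range.1 hj)
end

section
/- Let f = (u_1,…,u_Ω,0,…,0) be a schedule in longest-queue-first order (Q(u_1) ≥ ⋯ ≥ Q(u_Ω)), and for c ∈ {2,…,Ω} let f_c = (u_c, u_1,…,u_{c−1}, u_{c+1},…,u_Ω, 0,…,0) be the schedule that moves u_c to the front. Then w(f) − w(f_c) = Σ_{i=1}^{c−1} (Q(u_i) − Q(u_c))·1[g(u_i) ≠ g(u_c)] ≥ 0. -/
open Finset

/-- Schedule listing the users `l` in order followed by dummy slots up to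
length `K`. -/
noncomputable def toSched {U : Type} (K : ℕ) (l : List U) : List (Option U) :=
  l.map some ++ List.replicate (K - l.length) none

/-!
Splitting off the first slot gives `w(o :: L) = Q(o) · #{slots of L in a group other than
g(o)} + w(L)`. Moving `o` in front of a block `P` therefore changes only the terms in which `o`
meets an element `p` of `P`: before the move `p` counts `o` behind it, after it `o` counts `p`,
so each `p` contributes `(Q p - Q o) · 1[g p ≠ g o]`. In longest-queue-first order every such
factor `Q p - Q o` is nonnegative.
-/

noncomputable def countGroupNe {U G : Type} [DecidableEq G] (g : U → G) (t : Option G)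
    (L : List (Option U)) : ℝ :=
  (L.map fun o => if o.map g ≠ t then (1 : ℝ) else 0).sum

@[simp] lemma slot_cons_zero {U : Type} (o : Option U) (L : List (Option U)) :
    slot (o :: L) 0 = o := rfl

@[simp] lemma slot_cons_succ {U : Type} (o : Option U) (L : List (Option U)) (i : ℕ) :
    slot (o :: L) (i + 1) = slot L i := rfl

lemma sum_range_length_slot {U M : Type} [AddCommMonoid M] (F : Option U → M) :
    ∀ L : List (Option U), ∑ j ∈ range L.length, F (slot L j) = (L.map F).sum
  | [] => by simp
  | o :: L => by
    rw [List.length_cons, sum_range_succ', List.map_cons, List.sum_cons, add_comm]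
    simp only [slot_cons_succ, slot_cons_zero, sum_range_length_slot F L]

section

variable {U G : Type} [DecidableEq G] (Q : U → ℝ) (g : U → G)

lemma rate_cons_zero (o : Option U) (L : List (Option U)) :
    rate g (o :: L) 0 = countGroupNe g (o.map g) L := by
  rw [rate, List.length_cons, ← sum_Ico_add', Nat.Ico_zero_eq_range, countGroupNe,
    ← sum_range_length_slot]
  rfl

lemma rate_cons_succ (o : Option U) (L : List (Option U)) (i : ℕ) :
    rate g (o :: L) (i + 1) = rate g L i := by
  rw [rate, rate, List.length_cons, ← sum_Ico_add']
  rfl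

lemma wt_cons (o : Option U) (L : List (Option U)) :
    wt Q g (o :: L) = Qo Q o * countGroupNe g (o.map g) L + wt Q g L := by
  rw [wt, wt, List.length_cons, sum_range_succ', add_comm]
  simp only [slot_cons_succ, slot_cons_zero, rate_cons_succ, rate_cons_zero]

lemma wt_append_cons_sub_wt_cons_append (o : Option U) (S P : List (Option U)) :
    wt Q g (P ++ o :: S) - wt Q g (o :: (P ++ S)) =
      (P.map fun p => (Qo Q p - Qo Q o) * if p.map g ≠ o.map g then (1 : ℝ) else 0).sum := by
  induction P with
  | nil => simp
  | cons p P ih =>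
    simp only [List.cons_append, wt_cons, countGroupNe, List.map_append, List.map_cons,
      List.sum_append, List.sum_cons, ne_comm (a := o.map g)] at ih ⊢
    linear_combination ih

end

theorem stmt15_general {U G : Type} [DecidableEq G] (K : ℕ)
    (Q : U → ℝ) (g : U → G) (A B : List U) (x : U)
    (hsorted : (A ++ x :: B).Pairwise (fun a b => Q b ≤ Q a)) :
    wt Q g (toSched K (A ++ x :: B)) - wt Q g (toSched K (x :: (A ++ B))) =
        (A.map (fun a => (Q a - Q x) * if g a ≠ g x then (1 : ℝ) else 0)).sum ∧
      (0 : ℝ) ≤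
        (A.map (fun a => (Q a - Q x) * if g a ≠ g x then (1 : ℝ) else 0)).sum := by
  set tail := B.map some ++ List.replicate (K - (A ++ x :: B).length) none
  have hf : toSched K (A ++ x :: B) = A.map some ++ some x :: tail := by
    simp [toSched, tail]
  have hfc : toSched K (x :: (A ++ B)) = some x :: (A.map some ++ tail) := by
    simp [toSched, tail, Nat.add_assoc]
  refine ⟨?_, List.sum_nonneg ?_⟩
  · rw [hf, hfc, wt_append_cons_sub_wt_cons_append, List.map_map]
    simp [Qo, Function.comp_def]
  · simp only [List.mem_map]
    rintro _ ⟨a, ha, rfl⟩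
    have hxa : Q x ≤ Q a := (List.pairwise_append.1 hsorted).2.2 a ha x List.mem_cons_self
    exact mul_nonneg (sub_nonneg.2 hxa) (by positivity)

/-- Weight-difference identity for moving `u_c` to the front: if
`f = (u_1,…,u_Ω,0,…,0)` is in longest-queue-first order and `f_c` moves the
user `x = u_c` to the front, then
`w(f) − w(f_c) = Σ_{i<c} (Q(u_i) − Q(x))·1[g(u_i) ≠ g(x)] ≥ 0`. -/
theorem stmt15 {U G : Type} [DecidableEq G] (K Ω : ℕ) (hΩ : Ω ≤ K)
    (Q : U → ℝ) (g : U → G) (A B : List U) (x : U)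
    (hlen : (A ++ x :: B).length = Ω)
    (hsorted : (A ++ x :: B).Pairwise (fun a b => Q b ≤ Q a)) :
    wt Q g (toSched K (A ++ x :: B)) - wt Q g (toSched K (x :: (A ++ B))) =
        (A.map (fun a => (Q a - Q x) * if g a ≠ g x then (1 : ℝ) else 0)).sum ∧
      (0 : ℝ) ≤
        (A.map (fun a => (Q a - Q x) * if g a ≠ g x then (1 : ℝ) else 0)).sum :=
  stmt15_general K Q g A B x hsorted
end
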